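/- arXiv:1910.09421 — 6 statements merged into one kernel-verified Lean document; each statement's English description precedes it below -/
import Mathlib

section
/- In a group, suppose t_1, t_2, t_3, t_4 are involutions satisfying (t_1 t_2)^3 = (t_2 t_3)^3 = (t_3 t_4)^3 = (t_4 t_1)^3 = 1, (t_1 t_3)^2 = (t_2 t_4)^2 = 1, and (t_1 t_2 t_3 t_4 t_3 t_2)^2 = 1. Then (t_2 t_3 t_4 t_1 t_4 t_3)^2 = 1. -/
/-- For involutions `t₁, t₂, t₃, t₄` with the dihedral relations of a chordless `4`-cycle and the
cycle relation `(t₁ t₂ t₃ t₄ t₃ t₂)² = 1`, the cycle relation starting at the next vertex,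
`(t₂ t₃ t₄ t₁ t₄ t₃)² = 1`, also holds. -/
theorem stmt_8 {G : Type*} [Group G] (t1 t2 t3 t4 : G)
    (h1 : t1 ^ 2 = 1) (h2 : t2 ^ 2 = 1) (h3 : t3 ^ 2 = 1) (h4 : t4 ^ 2 = 1)
    (h12 : (t1 * t2) ^ 3 = 1) (h23 : (t2 * t3) ^ 3 = 1)
    (h34 : (t3 * t4) ^ 3 = 1) (h41 : (t4 * t1) ^ 3 = 1)
    (h13 : (t1 * t3) ^ 2 = 1) (h24 : (t2 * t4) ^ 2 = 1)
    (hc : (t1 * t2 * t3 * t4 * t3 * t2) ^ 2 = 1) :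
    (t2 * t3 * t4 * t1 * t4 * t3) ^ 2 = 1 := by
  have s1 : t1 * t1 = 1 := by rw [← sq]; exact h1
  have s2 : t2 * t2 = 1 := by rw [← sq]; exact h2
  have s3 : t3 * t3 = 1 := by rw [← sq]; exact h3
  have s4 : t4 * t4 = 1 := by rw [← sq]; exact h4
  have s1' : ∀ x : G, t1 * (t1 * x) = x := fun x => by rw [← mul_assoc, s1, one_mul]
  have s2' : ∀ x : G, t2 * (t2 * x) = x := fun x => by rw [← mul_assoc, s2, one_mul]
  have s3' : ∀ x : G, t3 * (t3 * x) = x := fun x => by rw [← mul_assoc, s3, one_mul]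
  have s4' : ∀ x : G, t4 * (t4 * x) = x := fun x => by rw [← mul_assoc, s4, one_mul]
  have i1 : t1⁻¹ = t1 := inv_eq_of_mul_eq_one_right s1
  have i2 : t2⁻¹ = t2 := inv_eq_of_mul_eq_one_right s2
  have i3 : t3⁻¹ = t3 := inv_eq_of_mul_eq_one_right s3
  have i4 : t4⁻¹ = t4 := inv_eq_of_mul_eq_one_right s4
  -- commutation of t1 and t3
  have c13 : t1 * t3 = t3 * t1 := by
    have e : (t1 * t3) * (t1 * t3) = 1 := by rw [← sq]; exact h13
    have e2 : t1 * t3 = (t1 * t3)⁻¹ := eq_inv_of_mul_eq_one_left e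
    rw [mul_inv_rev, i1, i3] at e2
    exact e2
  have c31' : ∀ x : G, t3 * (t1 * x) = t1 * (t3 * x) := fun x => by
    rw [← mul_assoc, ← c13, mul_assoc]
  -- braid relation for 1,2
  have b12 : t1 * t2 * t1 = t2 * t1 * t2 := by
    have e : (t1 * t2 * t1) * (t2 * t1 * t2) = 1 := by
      have := h12
      rw [pow_succ, pow_succ, pow_one] at this
      calc (t1 * t2 * t1) * (t2 * t1 * t2) = (t1 * t2) * (t1 * t2) * (t1 * t2) := by
            simp [mul_assoc]
        _ = 1 := this
    have e2 : t1 * t2 * t1 = (t2 * t1 * t2)⁻¹ := eq_inv_of_mul_eq_one_left e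
    rw [mul_inv_rev, mul_inv_rev, i1, i2] at e2
    rw [e2]; simp [mul_assoc]
  -- braid relation for 4,1 : t4 t1 t4 = t1 t4 t1
  have b41 : t4 * t1 * t4 = t1 * t4 * t1 := by
    have e : (t4 * t1 * t4) * (t1 * t4 * t1) = 1 := by
      have := h41
      rw [pow_succ, pow_succ, pow_one] at this
      calc (t4 * t1 * t4) * (t1 * t4 * t1) = (t4 * t1) * (t4 * t1) * (t4 * t1) := by
            simp [mul_assoc]
        _ = 1 := this
    have e2 : t4 * t1 * t4 = (t1 * t4 * t1)⁻¹ := eq_inv_of_mul_eq_one_left e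
    rw [mul_inv_rev, mul_inv_rev, i1, i4] at e2
    rw [e2]; simp [mul_assoc]
  -- associated forms of the braid relations
  have b12' : ∀ x : G, t2 * (t1 * (t2 * x)) = t1 * (t2 * (t1 * x)) := fun x => by
    rw [← mul_assoc, ← mul_assoc, ← b12, mul_assoc, mul_assoc]
  have b12'' : t2 * (t1 * t2) = t1 * (t2 * t1) := by
    rw [← mul_assoc, ← b12, mul_assoc]
  have b41' : ∀ x : G, t4 * (t1 * (t4 * x)) = t1 * (t4 * (t1 * x)) := fun x => by
    rw [← mul_assoc, ← mul_assoc, b41, mul_assoc, mul_assoc]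
  -- the cycle relation as a commuting statement
  have hx : t1 * (t2 * (t3 * (t4 * (t3 * (t2 * t1))))) = t2 * (t3 * (t4 * (t3 * t2))) := by
    apply mul_right_cancel (b := t2 * (t3 * (t4 * (t3 * t2))))
    have hcc : t1 * (t2 * (t3 * (t4 * (t3 * (t2 * (t1 * (t2 * (t3 * (t4 * (t3 * t2)))))))))) = 1 := by
      have := hc
      rw [sq] at this
      calc t1 * (t2 * (t3 * (t4 * (t3 * (t2 * (t1 * (t2 * (t3 * (t4 * (t3 * t2))))))))))
          = (t1 * t2 * t3 * t4 * t3 * t2) * (t1 * t2 * t3 * t4 * t3 * t2) := by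
            simp [mul_assoc]
        _ = 1 := this
    calc t1 * (t2 * (t3 * (t4 * (t3 * (t2 * t1))))) * (t2 * (t3 * (t4 * (t3 * t2))))
        = t1 * (t2 * (t3 * (t4 * (t3 * (t2 * (t1 * (t2 * (t3 * (t4 * (t3 * t2)))))))))) := by
          simp [mul_assoc]
      _ = 1 := hcc
      _ = t2 * (t3 * (t4 * (t3 * t2))) * (t2 * (t3 * (t4 * (t3 * t2)))) := by
          simp [mul_assoc, s2', s3', s4', s2, s3, s4]
  -- conjugate by t2
  have H2 : t2 * (t1 * (t2 * (t3 * (t4 * (t3 * (t2 * (t1 * t2))))))) = t3 * (t4 * t3) := by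
    have := congrArg (fun x => t2 * x * t2) hx
    simpa [mul_assoc, s2', s2, s3', s4'] using this
  -- replace t2 t1 t2 by t1 t2 t1 on both sides
  rw [b12'] at H2
  rw [b12''] at H2
  -- conjugate by t1
  have H4 : t2 * (t1 * (t3 * (t4 * (t3 * (t1 * t2))))) = t1 * (t3 * (t4 * (t3 * t1))) := by
    have := congrArg (fun x => t1 * x * t1) H2
    simpa [mul_assoc, s1', s1] using this
  -- rewrite the goal word
  have hg : t2 * t3 * t4 * t1 * t4 * t3 = t2 * (t1 * (t3 * (t4 * (t3 * t1)))) := by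
    simp [mul_assoc, b41', c31', c13]
  rw [hg, sq]
  have := congrArg (fun x => x * (t1 * (t3 * (t4 * (t3 * t1))))) H4
  simpa [mul_assoc, s1', s3', s4', s1, s3, s4] using this
end

section
/- In a group, suppose t_1, t_2, t_3, t_4 are involutions satisfying (t_1 t_2)^3 = (t_2 t_3)^3 = (t_3 t_4)^3 = (t_4 t_1)^3 = 1, (t_1 t_3)^2 = (t_2 t_4)^2 = 1, and (t_1 t_2 t_3 t_4 t_3 t_2)^2 = 1. Then (t_1 t_4 t_3 t_2 t_3 t_4)^2 = 1. -/
/-- For involutions `t₁, t₂, t₃, t₄` with the dihedral relations of a chordless `4`-cycle and the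
cycle relation `(t₁ t₂ t₃ t₄ t₃ t₂)² = 1`, the cycle relation traversed in the opposite
direction, `(t₁ t₄ t₃ t₂ t₃ t₄)² = 1`, also holds. -/
theorem stmt_9 {G : Type*} [Group G] (t1 t2 t3 t4 : G)
    (h1 : t1 ^ 2 = 1) (h2 : t2 ^ 2 = 1) (h3 : t3 ^ 2 = 1) (h4 : t4 ^ 2 = 1)
    (h12 : (t1 * t2) ^ 3 = 1) (h23 : (t2 * t3) ^ 3 = 1)
    (h34 : (t3 * t4) ^ 3 = 1) (h41 : (t4 * t1) ^ 3 = 1)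
    (h13 : (t1 * t3) ^ 2 = 1) (h24 : (t2 * t4) ^ 2 = 1)
    (hc : (t1 * t2 * t3 * t4 * t3 * t2) ^ 2 = 1) :
    (t1 * t4 * t3 * t2 * t3 * t4) ^ 2 = 1 := by
  have i2 : t2⁻¹ = t2 := inv_eq_of_mul_eq_one_right (by rw [← sq]; exact h2)
  have i3 : t3⁻¹ = t3 := inv_eq_of_mul_eq_one_right (by rw [← sq]; exact h3)
  have i4 : t4⁻¹ = t4 := inv_eq_of_mul_eq_one_right (by rw [← sq]; exact h4)
  -- braid relation for t2, t3
  have b23 : t3 * t2 * t3 = t2 * t3 * t2 := by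
    have e : (t3 * t2 * t3) * (t2 * t3 * t2) = 1 := by
      have : (t3 * t2 * t3) * (t2 * t3 * t2) = t3 * (t2 * t3) ^ 3 * t3⁻¹ := by simp [pow_succ, mul_assoc]
      rw [this, h23, mul_one, mul_inv_cancel]
    have := eq_inv_of_mul_eq_one_left e
    rw [this, mul_inv_rev, mul_inv_rev, i2, i3, mul_assoc]
  -- braid relation for t3, t4
  have b34 : t4 * t3 * t4 = t3 * t4 * t3 := by
    have e : (t4 * t3 * t4) * (t3 * t4 * t3) = 1 := by
      have : (t4 * t3 * t4) * (t3 * t4 * t3) = t4 * (t3 * t4) ^ 3 * t4⁻¹ := by simp [pow_succ, mul_assoc]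
      rw [this, h34, mul_one, mul_inv_cancel]
    have := eq_inv_of_mul_eq_one_left e
    rw [this, mul_inv_rev, mul_inv_rev, i3, i4, mul_assoc]
  -- commutation of t2 and t4
  have c24 : t4 * t2 = t2 * t4 := by
    have e : (t4 * t2) * (t4 * t2) = 1 := by
      have : (t4 * t2) * (t4 * t2) = t4 * (t2 * t4) ^ 2 * t4⁻¹ := by simp [pow_succ, mul_assoc]
      rw [this, h24, mul_one, mul_inv_cancel]
    have := eq_inv_of_mul_eq_one_left e
    rw [this, mul_inv_rev, i2, i4]
  -- key: the conjugated reflections coincide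
  have key : t4 * t3 * t2 * t3 * t4 = t2 * t3 * t4 * t3 * t2 := by
    calc t4 * t3 * t2 * t3 * t4 = t4 * (t3 * t2 * t3) * t4 := by group
      _ = t4 * (t2 * t3 * t2) * t4 := by rw [b23]
      _ = (t4 * t2) * t3 * (t2 * t4) := by group
      _ = (t2 * t4) * t3 * (t4 * t2) := by rw [c24, ← c24]
      _ = t2 * (t4 * t3 * t4) * t2 := by group
      _ = t2 * (t3 * t4 * t3) * t2 := by rw [b34]
      _ = t2 * t3 * t4 * t3 * t2 := by group
  have key' : t1 * t4 * t3 * t2 * t3 * t4 = t1 * t2 * t3 * t4 * t3 * t2 := by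
    calc t1 * t4 * t3 * t2 * t3 * t4 = t1 * (t4 * t3 * t2 * t3 * t4) := by group
      _ = t1 * (t2 * t3 * t4 * t3 * t2) := by rw [key]
      _ = t1 * t2 * t3 * t4 * t3 * t2 := by group
  rw [key']; exact hc
end

section
/- Let Φ be a simply-laced crystallographic root system with all roots of squared length 2, and let β_i, β_{i+1}, β_j be roots such that s_{β_j} commutes with neither s_{β_i} nor s_{β_{i+1}}, and s_{β_i} does not commute with s_{β_{i+1}}, and β_i, β_{i+1}, β_j are linearly independent. Then s_{β_j} commutes with s_{β_i} s_{β_{i+1}} s_{β_i}. -/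
open scoped RealInnerProductSpace

/-- The reflection `s_α` in the hyperplane orthogonal to `α`. -/
noncomputable def sRefl {V : Type*} [NormedAddCommGroup V] [InnerProductSpace ℝ V]
    (α : V) : V → V :=
  fun v => v - (2 * ⟪α, v⟫ / ⟪α, α⟫) • α

/-!
Write `a = (β_i|β_{i+1})`, `b = (β_j|β_i)`, `c = (β_j|β_{i+1})`. They are integers, nonzero
since the reflections do not commute, and of absolute value `< 2` by linear independence, hence
`±1`. The vector `w = β_i - a β_{i+1} - b β_j` is nonzero by linear independence, and
`(w|w) = 2 + 2abc`, so `abc = 1`, i.e. `c = ab`. Since `s_{β_i} s_{β_{i+1}} s_{β_i} = s_γ` for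
`γ = s_{β_i} β_{i+1} = β_{i+1} - a β_i`, and `(β_j|γ) = c - ab = 0`, the reflections
`s_{β_j}` and `s_γ` commute.
-/

theorem LinearIndependent.pair_of_fin_three {R M : Type*} [Semiring R] [AddCommMonoid M]
    [Module R M] {u : Fin 3 → M} (h : LinearIndependent R u) {i j : Fin 3} (hij : i ≠ j) :
    LinearIndependent R ![u i, u j] := by
  have hinj : Function.Injective ![i, j] := by
    intro k l
    fin_cases k <;> fin_cases l <;> simp [hij, hij.symm]
  convert h.comp _ hinj using 1
  ext k
  fin_cases k <;> rfl

section Reflection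

variable {V : Type*} [NormedAddCommGroup V] [InnerProductSpace ℝ V]

theorem inner_sRefl_right (α x v : V) :
    ⟪x, sRefl α v⟫ = ⟪x, v⟫ - 2 * ⟪α, v⟫ / ⟪α, α⟫ * ⟪x, α⟫ := by
  simp only [sRefl, inner_sub_right, real_inner_smul_right]

theorem sRefl_sub_smul (α x y : V) (t : ℝ) :
    sRefl α (x - t • y) = sRefl α x - t • sRefl α y := by
  simp only [sRefl, inner_sub_right, real_inner_smul_right]
  match_scalars <;> ring

theorem sRefl_sRefl_self (α v : V) : sRefl α (sRefl α v) = v := by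
  rcases eq_or_ne α 0 with rfl | hα
  · simp [sRefl]
  have hαα : ⟪α, α⟫ ≠ 0 := real_inner_self_pos.mpr hα |>.ne'
  simp only [sRefl, inner_sub_right, real_inner_smul_right, div_mul_cancel₀ _ hαα]
  module

theorem inner_sRefl_sRefl (α x y : V) : ⟪sRefl α x, sRefl α y⟫ = ⟪x, y⟫ := by
  rcases eq_or_ne α 0 with rfl | hα
  · simp [sRefl]
  have hαα : ⟪α, α⟫ ≠ 0 := real_inner_self_pos.mpr hα |>.ne'
  simp only [sRefl, inner_sub_left, inner_sub_right, real_inner_smul_left,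
    real_inner_smul_right, real_inner_comm α]
  field_simp
  ring

theorem sRefl_sRefl_sRefl (α β v : V) :
    sRefl α (sRefl β (sRefl α v)) = sRefl (sRefl α β) v := by
  have h := inner_sRefl_sRefl α β (sRefl α v)
  have hββ := inner_sRefl_sRefl α β β
  rw [sRefl_sRefl_self] at h
  have hmid : sRefl β (sRefl α v) = sRefl α v - (2 * ⟪β, sRefl α v⟫ / ⟪β, β⟫) • β := rfl
  rw [hmid, sRefl_sub_smul, sRefl_sRefl_self, ← h, ← hββ]
  rfl

theorem sRefl_comm_of_inner_eq_zero {α β : V} (h : ⟪α, β⟫ = 0) (v : V) :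
    sRefl α (sRefl β v) = sRefl β (sRefl α v) := by
  have h' : ⟪β, α⟫ = 0 := by rw [real_inner_comm]; exact h
  simp only [sRefl, inner_sub_right, real_inner_smul_right, h, h', mul_zero, sub_zero]
  abel

end Reflection

section Roots

variable {V : Type*} [NormedAddCommGroup V] [InnerProductSpace ℝ V]

theorem abs_inner_lt_two {α β : V} (hα : ⟪α, α⟫ = 2) (hβ : ⟪β, β⟫ = 2)
    (h : LinearIndependent ℝ ![α, β]) : |⟪α, β⟫| < 2 := by
  have hsq : ∀ t : ℝ, t = 1 ∨ t = -1 → 0 < 4 - 2 * t * ⟪α, β⟫ := by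
    rintro t ht
    have hne : α - t • β ≠ 0 := by
      intro h0
      have := LinearIndependent.pair_iff.mp h 1 (-t)
        (by rw [one_smul, neg_smul, ← sub_eq_add_neg, h0])
      exact one_ne_zero this.1
    have hpos := real_inner_self_pos.mpr hne
    simp only [inner_sub_left, inner_sub_right, real_inner_smul_left, real_inner_smul_right,
      hα, hβ, real_inner_comm α β] at hpos
    rcases ht with rfl | rfl <;> linarith
  rw [abs_lt]
  constructor <;> linarith [hsq 1 (Or.inl rfl), hsq (-1) (Or.inr rfl)]

theorem inner_sq_eq_one {α β : V} (hα : ⟪α, α⟫ = 2) (hβ : ⟪β, β⟫ = 2)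
    (hint : ∃ z : ℤ, ⟪α, β⟫ = z) (h : LinearIndependent ℝ ![α, β]) (h0 : ⟪α, β⟫ ≠ 0) :
    ⟪α, β⟫ ^ 2 = 1 := by
  obtain ⟨z, hz⟩ := hint
  have hlt := abs_inner_lt_two hα hβ h
  rw [hz] at hlt h0 ⊢
  have hz2 : |z| < 2 := by exact_mod_cast hlt
  have hz0 : z ≠ 0 := by exact_mod_cast h0
  obtain rfl | rfl : z = 1 ∨ z = -1 := by rw [abs_lt] at hz2; omega
  all_goals norm_num

theorem inner_eq_mul_inner_of_sq_eq_one {x y z : V}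
    (hx : ⟪x, x⟫ = 2) (hy : ⟪y, y⟫ = 2) (hz : ⟪z, z⟫ = 2)
    (hxy : ⟪x, y⟫ ^ 2 = 1) (hzx : ⟪z, x⟫ ^ 2 = 1) (hzy : ⟪z, y⟫ ^ 2 = 1)
    (h : LinearIndependent ℝ ![x, y, z]) :
    ⟪z, y⟫ = ⟪z, x⟫ * ⟪x, y⟫ := by
  set w := x - ⟪x, y⟫ • y - ⟪z, x⟫ • z
  have hw : w ≠ 0 := by
    intro h0
    have := Fintype.linearIndependent_iff.mp h ![1, -⟪x, y⟫, -⟪z, x⟫]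
      (by simpa [Fin.sum_univ_three, neg_smul, ← sub_eq_add_neg] using h0)
    simpa using this 0
  have hww : ⟪w, w⟫ = 2 + 2 * (⟪x, y⟫ * ⟪z, x⟫ * ⟪z, y⟫) := by
    simp only [w, inner_sub_left, inner_sub_right, real_inner_smul_left, real_inner_smul_right,
      hx, hy, hz, real_inner_comm x z, real_inner_comm y x, real_inner_comm y z]
    ring
  have hpos : 0 < 2 + 2 * (⟪x, y⟫ * ⟪z, x⟫ * ⟪z, y⟫) := hww ▸ real_inner_self_pos.mpr hw
  have hsq : (⟪x, y⟫ * ⟪z, x⟫ * ⟪z, y⟫) ^ 2 = 1 := by rw [mul_pow, mul_pow, hxy, hzx, hzy]; norm_num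
  have hprod : ⟪x, y⟫ * ⟪z, x⟫ * ⟪z, y⟫ = 1 := by nlinarith
  linear_combination (-⟪z, y⟫ * ⟪z, x⟫ ^ 2) * hxy - ⟪z, y⟫ * hzx + ⟪z, x⟫ * ⟪x, y⟫ * hprod

end Roots

theorem stmt_10_general {V : Type*} [NormedAddCommGroup V] [InnerProductSpace ℝ V]
    (Φ : Set V)
    (hcrys : ∀ α ∈ Φ, ∀ β ∈ Φ, ∃ z : ℤ, 2 * ⟪α, β⟫ / ⟪β, β⟫ = (z : ℝ))
    (hlen : ∀ α ∈ Φ, ⟪α, α⟫ = 2)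
    (βi βi1 βj : V) (hβi : βi ∈ Φ) (hβi1 : βi1 ∈ Φ) (hβj : βj ∈ Φ)
    (hji : ¬ ∀ v, sRefl βj (sRefl βi v) = sRefl βi (sRefl βj v))
    (hji1 : ¬ ∀ v, sRefl βj (sRefl βi1 v) = sRefl βi1 (sRefl βj v))
    (hii1 : ¬ ∀ v, sRefl βi (sRefl βi1 v) = sRefl βi1 (sRefl βi v))
    (hind : LinearIndependent ℝ ![βi, βi1, βj]) :
    ∀ v, sRefl βj ((sRefl βi ∘ sRefl βi1 ∘ sRefl βi) v) =
      (sRefl βi ∘ sRefl βi1 ∘ sRefl βi) (sRefl βj v) := by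
  have hroot : ∀ α ∈ Φ, ∀ β ∈ Φ, LinearIndependent ℝ ![α, β] →
      (¬ ∀ v, sRefl α (sRefl β v) = sRefl β (sRefl α v)) → ⟪α, β⟫ ^ 2 = 1 := by
    intro α hα β hβ hpair hnc
    obtain ⟨z, hz⟩ := hcrys α hα β hβ
    rw [hlen β hβ, mul_div_cancel_left₀ _ two_ne_zero] at hz
    exact inner_sq_eq_one (hlen α hα) (hlen β hβ) ⟨z, hz⟩ hpair
      fun h0 ↦ hnc (sRefl_comm_of_inner_eq_zero h0)
  have ha := hroot βi hβi βi1 hβi1 (hind.pair_of_fin_three (i := 0) (j := 1) (by decide)) hii1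
  have hb := hroot βj hβj βi hβi (hind.pair_of_fin_three (i := 2) (j := 0) (by decide)) hji
  have hc := hroot βj hβj βi1 hβi1 (hind.pair_of_fin_three (i := 2) (j := 1) (by decide)) hji1
  have hcab := inner_eq_mul_inner_of_sq_eq_one (hlen βi hβi) (hlen βi1 hβi1) (hlen βj hβj)
    ha hb hc hind
  have horth : ⟪βj, sRefl βi βi1⟫ = 0 := by
    rw [inner_sRefl_right, hlen βi hβi, hcab, mul_div_cancel_left₀ _ two_ne_zero]
    ring
  intro v
  simp only [Function.comp_apply, sRefl_sRefl_sRefl]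
  exact sRefl_comm_of_inner_eq_zero horth v

/-- Let `Φ` be a simply-laced crystallographic root system with all roots of squared length `2`,
and let `β_i, β_{i+1}, β_j ∈ Φ` be linearly independent roots such that `s_{β_j}` commutes with
neither `s_{β_i}` nor `s_{β_{i+1}}`, and `s_{β_i}` does not commute with `s_{β_{i+1}}`. Then
`s_{β_j}` commutes with `s_{β_i} s_{β_{i+1}} s_{β_i}`. -/
theorem stmt_10 {V : Type*} [NormedAddCommGroup V] [InnerProductSpace ℝ V]
    (Φ : Set V)
    (hspan : Submodule.span ℝ Φ = ⊤)
    (hpm : ∀ α ∈ Φ, ∀ c : ℝ, c • α ∈ Φ → c = 1 ∨ c = -1)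
    (hreflcl : ∀ α ∈ Φ, ∀ β ∈ Φ, sRefl α β ∈ Φ)
    (hcrys : ∀ α ∈ Φ, ∀ β ∈ Φ, ∃ z : ℤ, 2 * ⟪α, β⟫ / ⟪β, β⟫ = (z : ℝ))
    (hlen : ∀ α ∈ Φ, ⟪α, α⟫ = 2)
    (βi βi1 βj : V) (hβi : βi ∈ Φ) (hβi1 : βi1 ∈ Φ) (hβj : βj ∈ Φ)
    (hji : ¬ ∀ v, sRefl βj (sRefl βi v) = sRefl βi (sRefl βj v))
    (hji1 : ¬ ∀ v, sRefl βj (sRefl βi1 v) = sRefl βi1 (sRefl βj v))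
    (hii1 : ¬ ∀ v, sRefl βi (sRefl βi1 v) = sRefl βi1 (sRefl βi v))
    (hind : LinearIndependent ℝ ![βi, βi1, βj]) :
    ∀ v, sRefl βj ((sRefl βi ∘ sRefl βi1 ∘ sRefl βi) v) =
      (sRefl βi ∘ sRefl βi1 ∘ sRefl βi) (sRefl βj v) :=
  stmt_10_general Φ hcrys hlen βi βi1 βj hβi hβi1 hβj hji hji1 hii1 hind
end

section
/- In a group, let t_1, t_2, t_3 be involutions with (t_1 t_2)^4 = 1, (t_2 t_3)^3 = 1, and (t_1 t_3 t_2 t_3)^2 = 1 (relations attached to a 3-cycle with one double edge). Set r_1 = t_2 t_1 t_2 (so t_1 = r_2 r_1 r_2 with r_2 = t_2, r_3 = t_3). Then ((t_2 t_1 t_2) t_3)^4 = 1. -/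
/-- For involutions `t₁, t₂, t₃` with `(t₁t₂)⁴ = 1`, `(t₂t₃)³ = 1` and `(t₁t₃t₂t₃)² = 1`
(the relations attached to a 3-cycle with one double edge), the conjugated generator
`t₂t₁t₂` satisfies `((t₂t₁t₂)t₃)⁴ = 1`. -/
theorem stmt_15 {G : Type*} [Group G] (t1 t2 t3 : G)
    (h1 : t1 ^ 2 = 1) (h2 : t2 ^ 2 = 1) (h3 : t3 ^ 2 = 1)
    (h12 : (t1 * t2) ^ 4 = 1) (h23 : (t2 * t3) ^ 3 = 1)
    (hc : (t1 * t3 * t2 * t3) ^ 2 = 1) :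
    ((t2 * t1 * t2) * t3) ^ 4 = 1 := by
  have m2 : t2 * t2 = 1 := by rw [← pow_two]; exact h2
  have m3 : t3 * t3 = 1 := by rw [← pow_two]; exact h3
  have i2 : t2⁻¹ = t2 := inv_eq_of_mul_eq_one_right m2
  have i3 : t3⁻¹ = t3 := inv_eq_of_mul_eq_one_right m3
  have hbr : t2 * t3 * t2 * (t3 * t2 * t3) = 1 := by rw [← h23, pow_succ, pow_succ, pow_one]; simp [mul_assoc]
  have braid : t2 * t3 * t2 = t3 * t2 * t3 := by
    have := eq_inv_of_mul_eq_one_left hbr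
    rw [this, mul_inv_rev, mul_inv_rev, i2, i3]
    group
  have hx : (t1 * t2 * t3 * t2) ^ 2 = 1 := by
    have e : t1 * t2 * t3 * t2 = t1 * t3 * t2 * t3 := by
      rw [mul_assoc t1, mul_assoc t1, braid]; group
    rw [e]; exact hc
  have e : (t2 * t1 * t2) * t3 = t2 * (t1 * t2 * t3 * t2) * t2⁻¹ := by
    rw [i2]
    calc (t2 * t1 * t2) * t3 = t2 * (t1 * t2 * t3) * (t2 * t2) := by rw [m2]; group
    _ = t2 * (t1 * t2 * t3 * t2) * t2 := by group
  rw [e, conj_pow, show (4 : ℕ) = 2 * 2 from rfl, pow_mul, hx, one_pow, mul_one,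
    mul_inv_cancel]
end

section
/- In a group, let r_i, r_{i+1}, r_k be involutions with (r_{i+1} r_k)^3 = 1, (r_i r_{i+1})^4 = 1, and (r_i r_k)^3 = 1, and suppose (r_i r_k r_{i+1} r_k)^2 = 1. Then (r_{i+1} r_i r_{i+1} r_k)^4 = (r_{i+1} r_k)^3 = 1; in particular (r_{i+1} r_i r_{i+1} r_k)^4 = 1. -/
/-- For involutions `r_i, r_{i+1}, r_k` with `(r_{i+1}r_k)³ = 1`, `(r_i r_{i+1})⁴ = 1`,
`(r_i r_k)³ = 1` and `(r_i r_k r_{i+1} r_k)² = 1`, one has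
`(r_{i+1} r_i r_{i+1} r_k)⁴ = (r_{i+1} r_k)³ = 1`; in particular
`(r_{i+1} r_i r_{i+1} r_k)⁴ = 1`. -/
theorem stmt_16 {G : Type*} [Group G] (ri ri1 rk : G)
    (hi : ri ^ 2 = 1) (hi1 : ri1 ^ 2 = 1) (hk : rk ^ 2 = 1)
    (h1 : (ri1 * rk) ^ 3 = 1) (h2 : (ri * ri1) ^ 4 = 1) (h3 : (ri * rk) ^ 3 = 1)
    (hc : (ri * rk * ri1 * rk) ^ 2 = 1) :
    (ri1 * ri * ri1 * rk) ^ 4 = (ri1 * rk) ^ 3 ∧ (ri1 * ri * ri1 * rk) ^ 4 = 1 := by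
  have ha : ri * ri = 1 := by simpa [pow_two] using hi
  have hb : ri1 * ri1 = 1 := by simpa [pow_two] using hi1
  have hkk : rk * rk = 1 := by simpa [pow_two] using hk
  have ha' : ∀ x : G, ri * (ri * x) = x := fun x => by rw [← mul_assoc, ha, one_mul]
  have hb' : ∀ x : G, ri1 * (ri1 * x) = x := fun x => by rw [← mul_assoc, hb, one_mul]
  have hk' : ∀ x : G, rk * (rk * x) = x := fun x => by rw [← mul_assoc, hkk, one_mul]
  -- braid relation cbc = bcb
  have h1' : ri1 * (rk * (ri1 * (rk * (ri1 * rk)))) = 1 := by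
    simpa [pow_succ, mul_assoc] using h1
  have hx : rk * (ri1 * rk) = ri1 * (rk * ri1) := by
    have e1 : rk * (ri1 * (rk * (ri1 * rk))) = ri1 := by
      have := congrArg (fun y => ri1 * y) h1'
      simpa [hb'] using this
    have e2 : ri1 * (rk * (ri1 * rk)) = rk * ri1 := by
      have := congrArg (fun y => rk * y) e1
      simpa [hk'] using this
    have := congrArg (fun y => ri1 * y) e2
    simpa [hb'] using this
  -- a commutes with cbc
  have hc' : ri * (rk * (ri1 * (rk * (ri * (rk * (ri1 * rk)))))) = 1 := by
    simpa [pow_succ, mul_assoc] using hc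
  have hm : (rk * (ri1 * rk)) * (rk * (ri1 * rk)) = 1 := by
    simp [mul_assoc, hk', hb', hkk]
  have hcomm : ri * (rk * (ri1 * rk)) = rk * (ri1 * (rk * ri)) := by
    have hw : (ri * (rk * (ri1 * rk))) * (ri * (rk * (ri1 * rk))) = 1 := by
      simpa [mul_assoc] using hc'
    have hinv : (ri * (rk * (ri1 * rk)))⁻¹ = ri * (rk * (ri1 * rk)) :=
      inv_eq_of_mul_eq_one_right hw
    have : (ri * (rk * (ri1 * rk)))⁻¹ = (rk * (ri1 * rk))⁻¹ * ri⁻¹ := by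
      rw [mul_inv_rev]
    rw [hinv, inv_eq_of_mul_eq_one_right hm, inv_eq_of_mul_eq_one_right ha] at this
    simpa [mul_assoc] using this
  -- rewriting forms
  have hx' : ∀ x : G, ri1 * (rk * (ri1 * x)) = rk * (ri1 * (rk * x)) := fun x => by
    rw [← mul_assoc, ← mul_assoc, ← mul_assoc, ← mul_assoc,
      show ri1 * rk * ri1 = rk * ri1 * rk by simpa [mul_assoc] using hx.symm,
      mul_assoc, mul_assoc]
  have hcomm' : ∀ x : G, ri * (rk * (ri1 * (rk * x))) = rk * (ri1 * (rk * (ri * x))) :=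
    fun x => by
      rw [← mul_assoc, ← mul_assoc, ← mul_assoc, ← mul_assoc, ← mul_assoc, ← mul_assoc,
        show ri * rk * ri1 * rk = rk * ri1 * rk * ri by simpa [mul_assoc] using hcomm,
        mul_assoc, mul_assoc, mul_assoc]
  have key : (ri1 * ri * ri1 * rk) ^ 2 = (ri1 * rk) ^ 3 := by
    simp only [pow_succ, pow_zero, one_mul, mul_assoc]
    rw [hx', hcomm', ha']
  refine ⟨?_, ?_⟩
  · rw [show (4 : ℕ) = 2 * 2 by norm_num, pow_mul, key, h1, one_pow]
  · rw [show (4 : ℕ) = 2 * 2 by norm_num, pow_mul, key, h1, one_pow]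
end

section
/- Let Γ be a connected graph on n vertices which is a union of complete subgraphs Γ_1, ..., Γ_k satisfying: (ii) Γ_i and Γ_j intersect in at most one vertex for i ≠ j, (iii) every vertex belongs to at most two of the Γ_i, and (iv) Σ_{i=1}^k (|Γ_i| - 1) = n - 1. If moreover each Γ_i has at most 3 vertices, then every cycle of Γ is a triangle contained in some Γ_i. -/
/-!
The bipartite incidence graph between the vertices and the cliques `Γ_i` is connected, has
`n + k` vertices and `Σ |Γ_i| = (n - 1) + k` edges, so it is a tree. Hence, once the edges inside
some `Γ_i` are removed, no two vertices of `Γ_i` are connected any more, and a path between two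
vertices of `Γ_i` can never leave `Γ_i`. A cycle is an edge of some `Γ_i` followed by such a path,
so it lies in `Γ_i`, which has at most three vertices.
-/

open SimpleGraph Sum

namespace SimpleGraph

variable {V : Type*} {G : SimpleGraph V}

lemma Walk.exists_mem_support_reachable_deleteEdges_sym2 {s : Set V} {x b : V}
    (p : G.Walk x b) (hx : x ∉ s) (hb : b ∈ s) :
    ∃ z ∈ p.support, z ∈ s ∧ (G.deleteEdges s.sym2).Reachable x z := by
  induction p with
  | nil => exact absurd hb hx
  | @cons x y b h p ih =>
    have hxy : (G.deleteEdges s.sym2).Adj x y := by simp [h, hx]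
    by_cases hy : y ∈ s
    · exact ⟨y, by simp, hy, hxy.reachable⟩
    · obtain ⟨z, hz, hzs, hyz⟩ := ih hy hb
      exact ⟨z, by simp [hz], hzs, hxy.reachable.trans hyz⟩

lemma Walk.IsPath.support_subset_of_not_reachable_deleteEdges_sym2 {s : Set V}
    (hs : ∀ a ∈ s, ∀ b ∈ s, a ≠ b → ¬ (G.deleteEdges s.sym2).Reachable a b)
    {a b : V} {p : G.Walk a b} (hp : p.IsPath) (ha : a ∈ s) (hb : b ∈ s) :
    ∀ z ∈ p.support, z ∈ s := by
  induction p with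
  | nil => simpa using ha
  | @cons a x b h p ih =>
    obtain ⟨hp, hap⟩ := (Walk.cons_isPath_iff h p).mp hp
    by_cases hx : x ∈ s
    · simpa [ha] using ih hp hx hb
    · obtain ⟨z, hz, hzs, hxz⟩ := p.exists_mem_support_reachable_deleteEdges_sym2 hx hb
      have hax : (G.deleteEdges s.sym2).Adj a x := by simp [h, hx]
      exact absurd (hax.reachable.trans hxz) (hs a ha z hzs (by rintro rfl; exact hap hz))

lemma Walk.IsPath.length_lt_card_of_support_subset [DecidableEq V] {s : Finset V} {a b : V}
    {p : G.Walk a b} (hp : p.IsPath) (hs : ∀ z ∈ p.support, z ∈ s) : p.length < s.card := by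
  rw [Nat.lt_iff_add_one_le, ← p.length_support, ← List.toFinset_card_of_nodup hp.support_nodup]
  exact Finset.card_le_card fun z hz => hs z (List.mem_toFinset.mp hz)

end SimpleGraph

section IncidenceGraph

variable {V ι : Type*}

def incidenceGraph (C : ι → Finset V) : SimpleGraph (V ⊕ ι) where
  Adj
    | inl v, inr i => v ∈ C i
    | inr i, inl v => v ∈ C i
    | _, _ => False
  symm := ⟨by rintro (v | i) (w | j) h <;> exact h⟩
  loopless := ⟨by rintro (v | i) h <;> exact h⟩

namespace incidenceGraph

variable {C : ι → Finset V}

@[simp] lemma adj_inl_inr {v : V} {i : ι} : (incidenceGraph C).Adj (inl v) (inr i) ↔ v ∈ C i :=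
  Iff.rfl

@[simp] lemma adj_inr_inl {v : V} {i : ι} : (incidenceGraph C).Adj (inr i) (inl v) ↔ v ∈ C i :=
  Iff.rfl

@[simp] lemma not_adj_inl_inl {v w : V} : ¬ (incidenceGraph C).Adj (inl v) (inl w) := id

@[simp] lemma not_adj_inr_inr {i j : ι} : ¬ (incidenceGraph C).Adj (inr i) (inr j) := id

lemma card_edgeSet [Fintype ι] (C : ι → Finset V) :
    Nat.card (incidenceGraph C).edgeSet = ∑ i, (C i).card := by
  rw [← Finset.card_sigma, ← Nat.card_eq_finsetCard]
  refine (Nat.card_eq_of_bijective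
    (fun x => ⟨s(inl x.1.2, inr x.1.1), by simpa using (Finset.mem_sigma.mp x.2).2⟩) ⟨?_, ?_⟩).symm
  · rintro ⟨⟨i, v⟩, _⟩ ⟨⟨j, w⟩, _⟩ h
    simp_all
  · rintro ⟨e, he⟩
    induction e using Sym2.ind with
    | _ a b =>
    rcases a with v | i <;> rcases b with w | j <;> simp at he
    · exact ⟨⟨⟨j, v⟩, by simpa using he⟩, rfl⟩
    · exact ⟨⟨⟨i, w⟩, by simpa using he⟩, by simp [Sym2.eq_swap]⟩

lemma connected {G : SimpleGraph V} (hG : G.Connected)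
    (hcover : ∀ u v, G.Adj u v → ∃ i, u ∈ C i ∧ v ∈ C i) (hne : ∀ i, (C i).Nonempty) :
    (incidenceGraph C).Connected := by
  have reach_inl : ∀ u v, (incidenceGraph C).Reachable (inl u) (inl v) := by
    intro u v
    obtain ⟨p⟩ := hG.preconnected u v
    induction p with
    | nil => rfl
    | cons h _ ih =>
      obtain ⟨i, hu, hv⟩ := hcover _ _ h
      exact (adj_inl_inr.mpr hu).reachable.trans ((adj_inr_inl.mpr hv).reachable.trans ih)
  have reach_some_inl : ∀ a, ∃ u, (incidenceGraph C).Reachable a (inl u) := by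
    rintro (u | i)
    · exact ⟨u, .rfl⟩
    · obtain ⟨u, hu⟩ := hne i
      exact ⟨u, (adj_inr_inl.mpr hu).reachable⟩
  have : Nonempty V := hG.nonempty
  refine .mk fun a b => ?_
  obtain ⟨u, hu⟩ := reach_some_inl a
  obtain ⟨v, hv⟩ := reach_some_inl b
  exact hu.trans ((reach_inl u v).trans hv.symm)

lemma isAcyclic [Fintype V] [Fintype ι] {G : SimpleGraph V} (hG : G.Connected)
    (hcover : ∀ u v, G.Adj u v → ∃ i, u ∈ C i ∧ v ∈ C i) (hne : ∀ i, (C i).Nonempty)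
    (hcard : ∑ i, ((C i).card - 1) = Fintype.card V - 1) :
    (incidenceGraph C).IsAcyclic := by
  refine (isTree_iff_connected_and_card.mpr ⟨connected hG hcover hne, ?_⟩).isAcyclic
  have hsum : ∑ i, (C i).card = ∑ i, ((C i).card - 1) + Fintype.card ι := by
    rw [← Finset.card_univ, Finset.card_eq_sum_ones, ← Finset.sum_add_distrib]
    exact Finset.sum_congr rfl fun i _ => (Nat.sub_add_cancel (hne i).card_pos).symm
  have : 0 < Fintype.card V := Fintype.card_pos_iff.mpr hG.nonempty
  rw [card_edgeSet, hsum, hcard, Nat.card_sum, Nat.card_eq_fintype_card, Nat.card_eq_fintype_card]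
  omega

/-- Otherwise the edges from `inr i` to `inl a` and to `inl b` would lie on a common cycle. -/
lemma not_reachable_deleteEdges_sym2 {G : SimpleGraph V} (hH : (incidenceGraph C).IsAcyclic)
    (hcover : ∀ u v, G.Adj u v → ∃ i, u ∈ C i ∧ v ∈ C i) {i : ι} {a b : V} (ha : a ∈ C i)
    (hb : b ∈ C i) (hab : a ≠ b) : ¬ (G.deleteEdges (C i : Set V).sym2).Reachable a b := by
  set H := (incidenceGraph C).deleteEdges {s(inl a, inr i)}
  have lift : ∀ x y, (G.deleteEdges (C i : Set V).sym2).Reachable x y →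
      H.Reachable (inl x) (inl y) := by
    rintro _ _ ⟨p⟩
    induction p with
    | nil => exact .rfl
    | @cons x y _ h _ ih =>
      rw [deleteEdges_adj, Set.mk_mem_sym2_iff] at h
      obtain ⟨j, hx, hy⟩ := hcover _ _ h.1
      have hji : j ≠ i := by rintro rfl; exact h.2 ⟨hx, hy⟩
      have h₁ : H.Adj (inl x) (inr j) := by simp [H, hx, hji]
      have h₂ : H.Adj (inr j) (inl y) := by simp [H, hy, hji]
      exact h₁.reachable.trans (h₂.reachable.trans ih)
  intro hreach
  have hbi : H.Adj (inl b) (inr i) := by simp [H, hb, hab.symm]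
  exact isBridge_iff.mp (isAcyclic_iff_forall_adj_isBridge.mp hH (adj_inl_inr.mpr ha))
    ((lift a b hreach).trans hbi.reachable)

end incidenceGraph

end IncidenceGraph

theorem stmt_18_general {V : Type*} [Fintype V] [DecidableEq V] {n k : ℕ}
    (Γ : SimpleGraph V) (hn : Fintype.card V = n) (hconn : Γ.Connected)
    (C : Fin k → Finset V)
    (hnonempty : ∀ i, (C i).Nonempty)
    (hcover : ∀ u v : V, Γ.Adj u v → ∃ i, u ∈ C i ∧ v ∈ C i)
    (hiv : ∑ i, ((C i).card - 1) = n - 1)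
    (hsize : ∀ i, (C i).card ≤ 3) :
    ∀ (v : V) (w : Γ.Walk v v), w.IsCycle →
      w.length = 3 ∧ ∃ i, ∀ u ∈ w.support, u ∈ C i := by
  have hH := incidenceGraph.isAcyclic hconn hcover hnonempty (hn ▸ hiv)
  rintro v (_ | ⟨h, p⟩) hw
  · exact absurd hw Walk.not_isCycle_nil
  obtain ⟨hp, -⟩ := (Walk.cons_isCycle_iff p h).mp hw
  obtain ⟨i, hv, hx⟩ := hcover _ _ h
  have hsub : ∀ z ∈ p.support, z ∈ C i :=
    hp.support_subset_of_not_reachable_deleteEdges_sym2 (s := (C i : Set V))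
      (fun a ha b hb => incidenceGraph.not_reachable_deleteEdges_sym2 hH hcover ha hb) hx hv
  have hlt := hp.length_lt_card_of_support_subset hsub
  have h3 := hw.three_le_length
  refine ⟨?_, i, by simpa [hv] using hsub⟩
  have := hsize i
  rw [Walk.length_cons] at h3 ⊢
  omega

/-- Let `Γ` be a connected graph on `n` vertices which is the union of complete subgraphs
`Γ_1, …, Γ_k` (each on at most 3 vertices) such that (ii) two distinct `Γ_i` meet in at most one
vertex, (iii) every vertex belongs to at most two of the `Γ_i`, and
(iv) `Σ (|Γ_i| - 1) = n - 1`. Then every cycle of `Γ` is a triangle contained in some `Γ_i`. -/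
theorem stmt_18 {V : Type*} [Fintype V] [DecidableEq V] {n k : ℕ}
    (Γ : SimpleGraph V) (hn : Fintype.card V = n) (hconn : Γ.Connected)
    (C : Fin k → Finset V)
    (hnonempty : ∀ i, (C i).Nonempty)
    (hclique : ∀ i, ∀ u ∈ C i, ∀ v ∈ C i, u ≠ v → Γ.Adj u v)
    (hcover : ∀ u v : V, Γ.Adj u v → ∃ i, u ∈ C i ∧ v ∈ C i)
    (hii : ∀ i j, i ≠ j → (C i ∩ C j).card ≤ 1)
    (hiii : ∀ v : V, (Finset.univ.filter fun i => v ∈ C i).card ≤ 2)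
    (hiv : ∑ i, ((C i).card - 1) = n - 1)
    (hsize : ∀ i, (C i).card ≤ 3) :
    ∀ (v : V) (w : Γ.Walk v v), w.IsCycle →
      w.length = 3 ∧ ∃ i, ∀ u ∈ w.support, u ∈ C i :=
  stmt_18_general Γ hn hconn C hnonempty hcover hiv hsize
end
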